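/- arXiv:1409.0824 — 2 statements merged into one kernel-verified Lean document; each statement's English description precedes it below -/
import Mathlib

section
/- Let p and q be distinct sentential variables. Then C(p,q) ∧ p ⊨_Δ Oq. -/
/-- Formulas of the preference language L, generated from sentential
variables by negation, conjunction, and the binary connective ⪰. -/
inductive Fml (α : Type) : Type where
  | var : α → Fml α
  | neg : Fml α → Fml α
  | conj : Fml α → Fml α → Fml α
  | succeq : Fml α → Fml α → Fml α

namespace Fml

variable {α : Type}

/-- φ∨ψ := ¬(¬φ∧¬ψ) -/
def disj (φ ψ : Fml α) : Fml α := neg (conj (neg φ) (neg ψ))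
/-- φ→ψ := ¬φ∨ψ -/
def impl (φ ψ : Fml α) : Fml α := disj (neg φ) ψ
/-- φ↔ψ := (φ→ψ)∧(ψ→φ) -/
def iffF (φ ψ : Fml α) : Fml α := conj (impl φ ψ) (impl ψ φ)
/-- φ≻ψ := (φ⪰ψ)∧¬(ψ⪰φ) -/
def succ (φ ψ : Fml α) : Fml α := conj (succeq φ ψ) (neg (succeq ψ φ))
/-- ⊤ := p→p for a fixed variable p -/
def topF (p : α) : Fml α := impl (var p) (var p)
/-- ⊥ := ¬⊤ -/
def botF (p : α) : Fml α := neg (topF p)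
/-- ◻φ := ¬(¬φ⪰¬φ) -/
def box (φ : Fml α) : Fml α := neg (succeq (neg φ) (neg φ))
/-- ◇φ := φ⪰φ -/
def dia (φ : Fml α) : Fml α := succeq φ φ
/-- Conditional obligation C(φ,ψ) := (φ∧ψ) ≻ (φ∧¬ψ) -/
def Cond (φ ψ : Fml α) : Fml α := succ (conj φ ψ) (conj φ (neg ψ))
/-- Obligation Oψ := C(⊤,ψ), where ⊤ uses the fixed variable p -/
def Ob (p : α) (ψ : Fml α) : Fml α := Cond (topF p) ψ
/-- Permission Pψ := ¬O¬ψ -/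
def Perm (p : α) (ψ : Fml α) : Fml α := neg (Ob p (neg ψ))

end Fml

/-- A model (W,S,U,T): a nonempty set of worlds, a selection function
picking a member of each nonempty set of worlds, a real-valued utility
function, and a truth-assignment. -/
structure Model (α : Type) : Type 1 where
  W : Type
  nonempty : Nonempty W
  S : W → Set W → W
  S_mem : ∀ (w : W) (A : Set W), A.Nonempty → S w A ∈ A
  U : W → ℝ
  T : α → Set W

open Classical in
/-- The proposition ⟦φ⟧_M expressed by φ in the model M. -/
noncomputable def sat {α : Type} (M : Model α) : Fml α → Set M.W
  | .var p => M.T p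
  | .neg θ => (sat M θ)ᶜ
  | .conj θ ψ => sat M θ ∩ sat M ψ
  | .succeq θ ψ =>
      if sat M θ = ∅ ∨ sat M ψ = ∅ then ∅
      else {w | M.U (M.S w (sat M θ)) ≥ M.U (M.S w (sat M ψ))}

/-- φ ⊨ ψ : in every model, ⟦φ⟧ ⊆ ⟦ψ⟧. -/
def Implies {α : Type} (φ ψ : Fml α) : Prop :=
  ∀ M : Model α, sat M φ ⊆ sat M ψ

/-- ⊨ φ : in every model, ⟦φ⟧ = W. -/
def Valid {α : Type} (φ : Fml α) : Prop :=
  ∀ M : Model α, sat M φ = Set.univ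

/-- S is a selection function on W = 𝒫(Props): for each world w and
nonempty set A of worlds, S w A ∈ A. -/
def IsSelection {α : Type} (S : Set α → Set (Set α) → Set α) : Prop :=
  ∀ (w : Set α) (A : Set (Set α)), A.Nonempty → S w A ∈ A

/-- S is Δ-based: no w₁ ∈ A has w Δ w₁ properly included in w Δ S(w,A). -/
def DeltaBased {α : Type} (S : Set α → Set (Set α) → Set α) : Prop :=
  ∀ (w : Set α) (A : Set (Set α)), A.Nonempty →
    ¬ ∃ w1 ∈ A, symmDiff w w1 ⊂ symmDiff w (S w A)

/-- A Δ model: W = 𝒫(Props), T(p) = {w | p ∈ w}, and a Δ-based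
selection function. -/
structure DeltaModel (α : Type) : Type where
  S : Set α → Set (Set α) → Set α
  S_mem : ∀ (w : Set α) (A : Set (Set α)), A.Nonempty → S w A ∈ A
  delta : DeltaBased S
  U : Set α → ℝ

/-- The underlying model of a Δ model. -/
def DeltaModel.toModel {α : Type} (M : DeltaModel α) : Model α where
  W := Set α
  nonempty := ⟨∅⟩
  S := M.S
  S_mem := M.S_mem
  U := M.U
  T := fun p => {w : Set α | p ∈ w}

/-- φ ⊨_Δ ψ : in every Δ model, ⟦φ⟧ ⊆ ⟦ψ⟧. -/
def DeltaImplies {α : Type} (φ ψ : Fml α) : Prop :=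
  ∀ M : DeltaModel α, sat M.toModel φ ⊆ sat M.toModel ψ

/-- The g-distance between two worlds: the (possibly infinite) sum of the
weights of the variables in their symmetric difference. -/
noncomputable def gdist {α : Type} (g : α → ℝ) (w0 w1 : Set α) : ENNReal :=
  ∑' v : ↥(symmDiff w0 w1), ENNReal.ofReal (g v)

/-- S is g-based: no w' ∈ A is strictly g-closer to w than S(w,A). -/
def GBased {α : Type} (g : α → ℝ) (S : Set α → Set (Set α) → Set α) : Prop :=
  ∀ (w : Set α) (A : Set (Set α)), A.Nonempty →
    ¬ ∃ w' ∈ A, gdist g w w' < gdist g w (S w A)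

/-! At a world `w` with `p ∈ w`, Δ-minimality forces the selection from any set of `q`-worlds
containing `insert q w` to be `insert q w`, and from any set of `¬q`-worlds containing `w \ {q}`
to be `w \ {q}`. Since `p ≠ q`, both worlds still satisfy `p`, so `C(p,q)` and `Oq` compare the
utilities of the same two worlds. -/

open Fml Set

section Semantics

variable {α : Type} (M : Model α)

theorem sat_topF (p : α) : sat M (topF p) = univ := by
  simp only [topF, impl, disj, sat, compl_compl, inter_compl_self, compl_empty]

theorem sat_conj_topF (p : α) (φ : Fml α) : sat M (conj (topF p) φ) = sat M φ := by
  rw [sat, sat_topF, univ_inter]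

variable {M}

theorem mem_sat_succ_iff {θ ψ : Fml α} (hθ : (sat M θ).Nonempty) (hψ : (sat M ψ).Nonempty)
    {w : M.W} : w ∈ sat M (succ θ ψ) ↔ M.U (M.S w (sat M ψ)) < M.U (M.S w (sat M θ)) := by
  simp only [succ, sat, hθ.ne_empty, hψ.ne_empty, or_self, ↓reduceIte, mem_inter_iff,
    mem_compl_iff, mem_ofPred_eq, not_le, ge_iff_le]
  exact and_iff_right_of_imp le_of_lt

theorem mem_sat_Cond_iff {φ ψ : Fml α} (h₁ : (sat M (conj φ ψ)).Nonempty)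
    (h₂ : (sat M (conj φ (neg ψ))).Nonempty) {w : M.W} :
    w ∈ sat M (Cond φ ψ) ↔
      M.U (M.S w (sat M (conj φ (neg ψ)))) < M.U (M.S w (sat M (conj φ ψ))) :=
  mem_sat_succ_iff h₁ h₂

theorem mem_sat_Ob_iff (p : α) {ψ : Fml α} (h₁ : (sat M ψ).Nonempty)
    (h₂ : (sat M (neg ψ)).Nonempty) {w : M.W} :
    w ∈ sat M (Ob p ψ) ↔ M.U (M.S w (sat M (neg ψ))) < M.U (M.S w (sat M ψ)) := by
  have h := mem_sat_Cond_iff (φ := topF p) (ψ := ψ) (w := w) (by rwa [sat_conj_topF])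
    (by rwa [sat_conj_topF])
  rwa [sat_conj_topF, sat_conj_topF] at h

end Semantics

theorem symmDiff_insert_subset {α : Type} {q : α} {w v : Set α} (hv : q ∈ v) :
    symmDiff w (insert q w) ⊆ symmDiff w v := by
  intro x hx
  simp only [mem_symmDiff, mem_insert_iff] at hx ⊢
  grind

theorem symmDiff_diff_singleton_subset {α : Type} {q : α} {w v : Set α} (hv : q ∉ v) :
    symmDiff w (w \ {q}) ⊆ symmDiff w v := by
  intro x hx
  simp only [mem_symmDiff, mem_sdiff, mem_singleton_iff] at hx ⊢
  grind

namespace DeltaModel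

variable {α : Type} (M : DeltaModel α)

theorem S_eq_of_forall_symmDiff_subset {w a : Set α} {A : Set (Set α)} (ha : a ∈ A)
    (hmin : ∀ v ∈ A, symmDiff w a ⊆ symmDiff w v) : M.S w A = a := by
  by_contra hne
  refine M.delta w A ⟨a, ha⟩ ⟨a, ha, (hmin _ (M.S_mem w A ⟨a, ha⟩)).ssubset_of_ne ?_⟩
  exact fun h => hne (symmDiff_right_injective w h).symm

theorem S_eq_insert {w : Set α} {q : α} {A : Set (Set α)} (hA : ∀ v ∈ A, q ∈ v)
    (hw : insert q w ∈ A) : M.toModel.S w A = insert q w :=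
  M.S_eq_of_forall_symmDiff_subset hw fun v hv => symmDiff_insert_subset (hA v hv)

theorem S_eq_diff_singleton {w : Set α} {q : α} {A : Set (Set α)} (hA : ∀ v ∈ A, q ∉ v)
    (hw : w \ {q} ∈ A) : M.toModel.S w A = w \ {q} :=
  M.S_eq_of_forall_symmDiff_subset hw fun v hv => symmDiff_diff_singleton_subset (hA v hv)

end DeltaModel

open Fml in
theorem stmt_13 {α : Type} (p q : α) (hpq : p ≠ q) (p0 : α) :
    DeltaImplies (conj (Cond (var p) (var q)) (var p)) (Ob p0 (var q)) := by
  rintro M (w : Set α) ⟨hC, hp : p ∈ w⟩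
  have hpq_mem : insert q w ∈ sat M.toModel (conj (var p) (var q)) :=
    ⟨mem_insert_of_mem q hp, mem_insert q w⟩
  have hpnq_mem : w \ {q} ∈ sat M.toModel (conj (var p) (neg (var q))) :=
    ⟨⟨hp, hpq⟩, fun h => h.2 rfl⟩
  replace hC := (mem_sat_Cond_iff ⟨_, hpq_mem⟩ ⟨_, hpnq_mem⟩).1 hC
  rw [M.S_eq_insert (fun v hv => hv.2) hpq_mem,
    M.S_eq_diff_singleton (fun v hv => hv.2) hpnq_mem] at hC
  refine (mem_sat_Ob_iff p0 ⟨_, hpq_mem.2⟩ ⟨_, hpnq_mem.2⟩).2 ?_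
  rwa [M.S_eq_insert (A := sat M.toModel (var q)) (fun v hv => hv) hpq_mem.2,
    M.S_eq_diff_singleton (A := sat M.toModel (neg (var q))) (fun v hv => hv) hpnq_mem.2]
end

section
/- Let p, q, r be pairwise distinct sentential variables and let G be the class of weighting functions g with g(q) > g(p) and g(q) > g(r). Then Op ⊨_G O(p∧q) ∨ O(p∧¬q). -/
/-!
In a Δ model the selected world differs from `w` only in variables on which the set depends:
`S(w, ⟦p⟧) = w ∪ {p}` and `S(w, ⟦¬p⟧) = w ∖ {p}`, so `Op` holds at `w` iff
`U(w ∖ {p}) < U(w ∪ {p})`. According as `q ∈ w` or not, `p ∧ q` or `p ∧ ¬q` has extension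
`A = {z | p ∈ z ∧ (q ∈ z ↔ q ∈ w)}`, and again `S(w, A) = w ∪ {p}`. For `Aᶜ` the Δ condition only
says that `S(w, Aᶜ)` differs from `w` within `{p, q}`; but `w ∖ {p} ∈ Aᶜ` is at g-distance at most
`g p < g q`, so a g-closest world of `Aᶜ` keeps `q` as in `w`, which forces `S(w, Aᶜ) = w ∖ {p}`.
Hence the utility comparison behind `Op` is exactly the one behind `O` of that conjunction.
-/

open scoped symmDiff

section Semantics

variable {α : Type} (M : Model α)

lemma sat_topF_s18 (p0 : α) : sat M (Fml.topF p0) = Set.univ := by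
  ext w
  simp [Fml.topF, Fml.impl, Fml.disj, sat]

lemma sat_disj (φ ψ : Fml α) : sat M (Fml.disj φ ψ) = sat M φ ∪ sat M ψ := by
  ext w
  simp [Fml.disj, sat, or_iff_not_and_not]

lemma sat_succeq_of_nonempty {φ ψ : Fml α} (hφ : (sat M φ).Nonempty)
    (hψ : (sat M ψ).Nonempty) :
    sat M (Fml.succeq φ ψ) = {w | M.U (M.S w (sat M ψ)) ≤ M.U (M.S w (sat M φ))} := by
  simp [sat, hφ.ne_empty, hψ.ne_empty]

lemma sat_succ_of_nonempty {φ ψ : Fml α} (hφ : (sat M φ).Nonempty)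
    (hψ : (sat M ψ).Nonempty) :
    sat M (Fml.succ φ ψ) = {w | M.U (M.S w (sat M ψ)) < M.U (M.S w (sat M φ))} := by
  change sat M (Fml.succeq φ ψ) ∩ (sat M (Fml.succeq ψ φ))ᶜ = _
  rw [sat_succeq_of_nonempty M hφ hψ, sat_succeq_of_nonempty M hψ hφ]
  ext w
  simpa using le_of_lt

lemma sat_Ob {ψ : Fml α} (p0 : α) (h : (sat M ψ).Nonempty) (hc : (sat M ψ)ᶜ.Nonempty) :
    sat M (Fml.Ob p0 ψ) = {w | M.U (M.S w (sat M ψ)ᶜ) < M.U (M.S w (sat M ψ))} := by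
  have hconj : ∀ χ, sat M (Fml.conj (Fml.topF p0) χ) = sat M χ := fun χ => by
    simp [sat, sat_topF_s18]
  rw [Fml.Ob, Fml.Cond, sat_succ_of_nonempty] <;> simp only [hconj, sat.eq_2, h, hc]

end Semantics

section Worlds

variable {α : Type}

def DependsOnlyOn (A : Set (Set α)) (V : Set α) : Prop :=
  ∀ ⦃z z' : Set α⦄, (∀ v ∈ V, v ∈ z ↔ v ∈ z') → z ∈ A → z' ∈ A

lemma DependsOnlyOn.compl {A : Set (Set α)} {V : Set α} (h : DependsOnlyOn A V) :
    DependsOnlyOn Aᶜ V :=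
  fun _ _ hzz' hz hz' => hz (h (fun v hv => (hzz' v hv).symm) hz')

lemma notMem_symmDiff_iff {w z : Set α} {v : α} : v ∉ w ∆ z ↔ (v ∈ z ↔ v ∈ w) := by
  rw [Set.mem_symmDiff]
  tauto

lemma eq_insert_of_symmDiff_subset {w z : Set α} {p : α} (h : w ∆ z ⊆ {p}) (hp : p ∈ z) :
    z = insert p w := by
  ext v
  by_cases hv : v = p
  · simp [hv, hp]
  · simpa [hv] using notMem_symmDiff_iff.mp fun hmem => hv (h hmem)

lemma eq_diff_of_symmDiff_subset {w z : Set α} {p : α} (h : w ∆ z ⊆ {p}) (hp : p ∉ z) :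
    z = w \ {p} := by
  ext v
  by_cases hv : v = p
  · simp [hv, hp]
  · simpa [hv] using notMem_symmDiff_iff.mp fun hmem => hv (h hmem)

end Worlds

section Weighted

variable {α : Type} (g : α → ℝ)

lemma ofReal_le_gdist {w z : Set α} {v : α} (hv : v ∈ w ∆ z) :
    ENNReal.ofReal (g v) ≤ gdist g w z :=
  ENNReal.le_tsum (⟨v, hv⟩ : ↥(w ∆ z))

lemma gdist_le_of_symmDiff_subset_singleton {w z : Set α} {p : α} (h : w ∆ z ⊆ {p}) :
    gdist g w z ≤ ENNReal.ofReal (g p) :=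
  (ENNReal.tsum_mono_subtype (fun v => ENNReal.ofReal (g v)) h).trans
    (tsum_singleton p fun v => ENNReal.ofReal (g v)).le

variable {g} {S : Set α → Set (Set α) → Set α}

lemma GBased.gdist_S_le (hgb : GBased g S) (w : Set α) {A : Set (Set α)} {z : Set α}
    (hz : z ∈ A) : gdist g w (S w A) ≤ gdist g w z :=
  not_lt.mp fun h => hgb w A ⟨z, hz⟩ ⟨z, hz, h⟩

lemma GBased.notMem_symmDiff_S (hgb : GBased g S) (w : Set α) {A : Set (Set α)} {z : Set α}
    (hz : z ∈ A) {v : α} (hv : gdist g w z < ENNReal.ofReal (g v)) : v ∉ w ∆ S w A :=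
  fun hmem => ((hgb.gdist_S_le w hz).trans_lt hv).not_ge (ofReal_le_gdist g hmem)

end Weighted

namespace DeltaModel

variable {α : Type} (M : DeltaModel α)

lemma symmDiff_S_subset {A : Set (Set α)} {V : Set α} (hA : A.Nonempty)
    (hAV : DependsOnlyOn A V) (w : Set α) : w ∆ M.S w A ⊆ V := by
  intro v hv
  by_contra hvV
  have hagree : ∀ u ∈ V, u ∈ M.S w A ↔ u ∈ M.S w A ∆ {v} := fun u hu => by
    have : u ≠ v := fun h => hvV (h ▸ hu)
    simp [Set.mem_symmDiff, this]
  have htoggle : w ∆ (M.S w A ∆ {v}) = w ∆ M.S w A \ {v} := by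
    rw [← symmDiff_assoc]
    ext u
    by_cases hu : u = v
    · simp [Set.mem_symmDiff, hu, hv]
    · simp [Set.mem_symmDiff, hu]
  refine M.delta w A hA ⟨M.S w A ∆ {v}, hAV hagree (M.S_mem w A hA), ?_⟩
  rw [htoggle]
  exact Set.sdiff_singleton_ssubset.mpr hv

lemma dependsOnlyOn_setOf_mem (p : α) : DependsOnlyOn {z : Set α | p ∈ z} {p} :=
  fun _ _ h => (h p rfl).mp

lemma S_setOf_mem (p : α) (w : Set α) : M.S w {z | p ∈ z} = insert p w :=
  have hA : {z : Set α | p ∈ z}.Nonempty := ⟨{p}, Set.mem_singleton p⟩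
  eq_insert_of_symmDiff_subset (M.symmDiff_S_subset hA (dependsOnlyOn_setOf_mem p) w)
    (M.S_mem w _ hA)

lemma S_setOf_mem_compl (p : α) (w : Set α) : M.S w {z | p ∈ z}ᶜ = w \ {p} :=
  have hA : {z : Set α | p ∈ z}ᶜ.Nonempty := ⟨∅, Set.notMem_empty p⟩
  eq_diff_of_symmDiff_subset (M.symmDiff_S_subset hA (dependsOnlyOn_setOf_mem p).compl w)
    (M.S_mem w _ hA)

lemma sat_Ob_var (p0 p : α) :
    sat M.toModel (Fml.Ob p0 (.var p)) = {w | M.U (w \ {p}) < M.U (insert p w)} := by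
  rw [sat_Ob M.toModel (ψ := .var p) p0 ⟨({p} : Set α), Set.mem_singleton p⟩
    ⟨(∅ : Set α), Set.notMem_empty p⟩]
  change {w | M.U (M.S w {z | p ∈ z}ᶜ) < M.U (M.S w {z | p ∈ z})} = _
  simp only [S_setOf_mem, S_setOf_mem_compl]

variable {p q : α}

lemma dependsOnlyOn_setOf_mem_and_agree (w : Set α) :
    DependsOnlyOn {z : Set α | p ∈ z ∧ (q ∈ z ↔ q ∈ w)} {q, p} := by
  intro z z' h hz
  simp only [Set.mem_insert_iff, Set.mem_singleton_iff, forall_eq_or_imp, forall_eq] at h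
  exact ⟨h.2.mp hz.1, h.1.symm.trans hz.2⟩

lemma S_setOf_mem_and_agree (hpq : p ≠ q) (w : Set α) :
    M.S w {z | p ∈ z ∧ (q ∈ z ↔ q ∈ w)} = insert p w := by
  have hA : {z : Set α | p ∈ z ∧ (q ∈ z ↔ q ∈ w)}.Nonempty :=
    ⟨insert p w, Set.mem_insert p w, by simp [hpq.symm]⟩
  obtain ⟨hp, hq⟩ := M.S_mem w _ hA
  refine eq_insert_of_symmDiff_subset ?_ hp
  exact (Set.subset_insert_iff_of_notMem (notMem_symmDiff_iff.mpr hq)).mp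
    (M.symmDiff_S_subset hA (dependsOnlyOn_setOf_mem_and_agree w) w)

lemma S_setOf_mem_and_agree_compl {g : α → ℝ} (hgq : 0 < g q) (hgpq : g p < g q)
    (hgb : GBased g M.S) (w : Set α) : M.S w {z | p ∈ z ∧ (q ∈ z ↔ q ∈ w)}ᶜ = w \ {p} := by
  have hcand : w \ {p} ∈ {z : Set α | p ∈ z ∧ (q ∈ z ↔ q ∈ w)}ᶜ := fun h => h.1.2 rfl
  have hA := Set.nonempty_of_mem hcand
  have hsub : w ∆ (w \ {p}) ⊆ {p} := fun v hv => by
    simp only [Set.mem_symmDiff, Set.mem_sdiff, Set.mem_singleton_iff] at hv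
    tauto
  have hdist : gdist g w (w \ {p}) < ENNReal.ofReal (g q) :=
    (gdist_le_of_symmDiff_subset_singleton g hsub).trans_lt
      ((ENNReal.ofReal_lt_ofReal_iff hgq).mpr hgpq)
  have hq := hgb.notMem_symmDiff_S w hcand hdist
  refine eq_diff_of_symmDiff_subset ((Set.subset_insert_iff_of_notMem hq).mp
    (M.symmDiff_S_subset hA (dependsOnlyOn_setOf_mem_and_agree w).compl w)) fun hp => ?_
  exact M.S_mem w _ hA ⟨hp, notMem_symmDiff_iff.mp hq⟩

end DeltaModel

open Fml in
theorem stmt_18_general {α : Type} (p q : α) (hpq : p ≠ q)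
    (p0 : α) (g : α → ℝ) (hg : ∀ v, 0 < g v) (hgp : g q > g p)
    (M : DeltaModel α) (hgb : GBased g M.S) :
    sat M.toModel (Ob p0 (var p))
      ⊆ sat M.toModel (disj (Ob p0 (conj (var p) (var q)))
                            (Ob p0 (conj (var p) (neg (var q))))) := by
  intro (w : Set α) hw
  rw [M.sat_Ob_var] at hw
  set A : Set (Set α) := {z | p ∈ z ∧ (q ∈ z ↔ q ∈ w)}
  have hA : A.Nonempty := ⟨insert p w, Set.mem_insert p w, by simp [hpq.symm]⟩
  have hOb : ∀ ψ : Fml α, sat M.toModel ψ = A → w ∈ sat M.toModel (Ob p0 ψ) := by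
    intro ψ hψ
    rw [sat_Ob _ p0 (hψ ▸ hA) (hψ ▸ ⟨(w \ {p} : Set α), fun h => h.1.2 rfl⟩), hψ]
    change M.U (M.S w Aᶜ) < M.U (M.S w A)
    rwa [M.S_setOf_mem_and_agree hpq w, M.S_setOf_mem_and_agree_compl (hg q) hgp hgb w]
  rw [sat_disj]
  by_cases hqw : q ∈ w
  · refine Or.inl (hOb _ ?_)
    change {z : Set α | p ∈ z} ∩ {z | q ∈ z} = A
    ext z
    simp [A, hqw]
  · refine Or.inr (hOb _ ?_)
    change {z : Set α | p ∈ z} ∩ {z | q ∈ z}ᶜ = A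
    ext z
    simp [A, hqw]

open Fml in
theorem stmt_18 {α : Type} (p q r : α) (hpq : p ≠ q) (hpr : p ≠ r) (hqr : q ≠ r)
    (p0 : α) (g : α → ℝ) (hg : ∀ v, 0 < g v) (hgp : g q > g p) (hgr : g q > g r)
    (M : DeltaModel α) (hgb : GBased g M.S) :
    sat M.toModel (Ob p0 (var p))
      ⊆ sat M.toModel (disj (Ob p0 (conj (var p) (var q)))
                            (Ob p0 (conj (var p) (neg (var q))))) :=
  stmt_18_general p q hpq p0 g hg hgp M hgb
end
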